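/- The coefficient of x^N in the polynomial P(n) = Σ_λ (-1)^λ x^{(5λ²-λ)/2} [n choose ⌊(n+5λ)/2⌋] equals the number of partitions of N into parts that differ pairwise by at least 2 and have largest part at most n - 1. -/

import Mathlib

/-!
Both sides satisfy Schur's recurrence `f (n + 2) = f (n + 1) + x ^ (n + 1) * f n` with
`f 0 = f 1 = 1`. For kangaroo partitions with parts below `n + 2` this is the split according to
whether `n + 1` is a part (then `n` is not). For the alternating sum, combining the two
`q`-Pascal rules expands `[n + 2, m + 1]` as `[n + 1, ·] + x ^ (n + 1) [n, m]` plus a remainder;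
which rule leaves the remainder depends on the parity of `n + λ`, and in both cases the
remainders telescope in `λ`.
-/

/-- Gaussian binomial coefficient as a polynomial in `x`
(via the Pascal-type recurrence `[n choose k] = [n-1 choose k-1] + x^k [n-1 choose k]`;
it is zero for `k > n`). -/
noncomputable def gp : ℕ → ℕ → Polynomial ℤ
  | _, 0 => 1
  | 0, _ + 1 => 0
  | n + 1, k + 1 => gp n k + Polynomial.X ^ (k + 1) * gp n (k + 1)

/-- Gaussian binomial with integer arguments, zero out of range. -/
noncomputable def gpz (n k : ℤ) : Polynomial ℤ := if 0 ≤ n ∧ 0 ≤ k then gp n.toNat k.toNat else 0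

/-- Schur's polynomial `P(n) = Σ_λ (-1)^λ x^{(5λ²-λ)/2} [n choose ⌊(n+5λ)/2⌋]`. -/
noncomputable def P (n : ℤ) : Polynomial ℤ :=
  ∑ᶠ l : ℤ, (-1 : Polynomial ℤ) ^ l.natAbs *
    Polynomial.X ^ ((5 * l ^ 2 - l) / 2).toNat * gpz n ((n + 5 * l).fdiv 2)

open Polynomial Finset

theorem gp_zero_right (n : ℕ) : gp n 0 = 1 := by cases n <;> rfl

theorem gp_succ_succ (n k : ℕ) : gp (n + 1) (k + 1) = gp n k + X ^ (k + 1) * gp n (k + 1) := rfl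

theorem gp_eq_zero_of_lt : ∀ {n k : ℕ}, n < k → gp n k = 0
  | 0, _ + 1, _ => rfl
  | n + 1, k + 1, h => by
    rw [gp_succ_succ, gp_eq_zero_of_lt (by omega : n < k), gp_eq_zero_of_lt (by omega : n < k + 1)]
    ring

theorem gp_self : ∀ n : ℕ, gp n n = 1
  | 0 => rfl
  | n + 1 => by rw [gp_succ_succ, gp_self n, gp_eq_zero_of_lt n.lt_succ_self]; ring

theorem gp_succ_succ' (n k : ℕ) (hk : k ≤ n) :
    gp (n + 1) (k + 1) = X ^ (n - k) * gp n k + gp n (k + 1) := by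
  induction n generalizing k with
  | zero =>
    obtain rfl : k = 0 := by omega
    simp [gp_succ_succ, gp_zero_right, gp_eq_zero_of_lt]
  | succ n ih =>
    rcases k with _ | j
    · have h := ih 0 n.zero_le
      simp only [gp_succ_succ _ 0, gp_zero_right, Nat.sub_zero] at h ⊢
      linear_combination X * h
    obtain ⟨d, rfl⟩ : ∃ d, n = j + d := ⟨n - j, by omega⟩
    rcases d with _ | d
    · simp [gp_self, gp_eq_zero_of_lt]
    have h1 := ih j (by omega)
    have h2 := ih (j + 1) (by omega)
    rw [show j + (d + 1) - j = d + 1 by omega] at h1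
    rw [show j + (d + 1) - (j + 1) = d by omega] at h2
    rw [show j + (d + 1) + 1 - (j + 1) = d + 1 by omega, gp_succ_succ (j + (d + 1) + 1)]
    linear_combination h1 - X ^ (d + 1) * gp_succ_succ (j + (d + 1)) j + X ^ (j + 2) * h2
      - gp_succ_succ (j + (d + 1)) (j + 1)

theorem gpz_of_nonneg {n k : ℤ} (hn : 0 ≤ n) (hk : 0 ≤ k) : gpz n k = gp n.toNat k.toNat :=
  if_pos ⟨hn, hk⟩

theorem gpz_eq_zero {n k : ℤ} (h : k < 0 ∨ n < k) : gpz n k = 0 := by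
  unfold gpz
  split_ifs with hnk
  · exact gp_eq_zero_of_lt (by omega)
  · rfl

theorem nonneg_and_le_of_gpz_ne_zero {n k : ℤ} (h : gpz n k ≠ 0) : 0 ≤ k ∧ k ≤ n := by
  by_contra hk
  exact h (gpz_eq_zero (by omega))

theorem gpz_zero_right {n : ℤ} (hn : 0 ≤ n) : gpz n 0 = 1 := by
  rw [gpz_of_nonneg hn le_rfl, Int.toNat_zero, gp_zero_right]

theorem gpz_succ {n : ℤ} (hn : 0 ≤ n) (k : ℤ) :
    gpz (n + 1) k = gpz n (k - 1) + X ^ k.toNat * gpz n k := by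
  rcases lt_trichotomy k 0 with hk | rfl | hk
  · simp [gpz_eq_zero, hk, (by omega : k - 1 < 0)]
  · simp [gpz_zero_right, hn, (by omega : 0 ≤ n + 1), gpz_eq_zero]
  · obtain ⟨j, rfl⟩ : ∃ j : ℕ, k = j + 1 := ⟨(k - 1).toNat, by omega⟩
    obtain ⟨m, rfl⟩ : ∃ m : ℕ, n = m := ⟨n.toNat, by omega⟩
    simp only [gpz_of_nonneg, Nat.cast_nonneg, add_sub_cancel_right]
    exact gp_succ_succ m j

theorem gpz_succ' {n : ℤ} (hn : 0 ≤ n) (k : ℤ) :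
    gpz (n + 1) k = X ^ (n + 1 - k).toNat * gpz n (k - 1) + gpz n k := by
  rcases lt_trichotomy k 0 with hk | rfl | hk
  · simp [gpz_eq_zero, hk, (by omega : k - 1 < 0)]
  · simp [gpz_zero_right, hn, (by omega : 0 ≤ n + 1), gpz_eq_zero]
  rcases le_or_gt k (n + 1) with hkn | hkn
  · obtain ⟨j, rfl⟩ : ∃ j : ℕ, k = j + 1 := ⟨(k - 1).toNat, by omega⟩
    obtain ⟨m, rfl⟩ : ∃ m : ℕ, n = m := ⟨n.toNat, by omega⟩
    simp only [gpz_of_nonneg, Nat.cast_nonneg, add_sub_cancel_right]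
    rw [show ((m : ℤ) + 1 - (j + 1)).toNat = m - j by omega]
    exact gp_succ_succ' m j (by omega)
  · simp [gpz_eq_zero, hkn, (by omega : n < k), (by omega : n < k - 1)]

theorem X_pow_mul_gpz_congr {a b : ℕ} {n k : ℤ} (h : 0 ≤ k → k ≤ n → a = b) :
    X ^ a * gpz n k = X ^ b * gpz n k := by
  by_cases hk : 0 ≤ k ∧ k ≤ n
  · rw [h hk.1 hk.2]
  · rw [gpz_eq_zero (by omega), mul_zero, mul_zero]


theorem gpz_add_two {n : ℤ} (hn : 0 ≤ n) (k : ℤ) :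
    gpz (n + 2) (k + 1) = gpz (n + 1) k + X ^ (n + 1).toNat * gpz n k
      + X ^ (k + 1).toNat * gpz n (k + 1) := by
  have h₁ := gpz_succ (n := n + 1) (by omega) (k + 1)
  have h₂ := gpz_succ' hn (k + 1)
  have hX : X ^ (k + 1).toNat * X ^ (n + 1 - (k + 1)).toNat * gpz n k
      = X ^ (n + 1).toNat * gpz n k := by
    rw [← pow_add]; exact X_pow_mul_gpz_congr fun _ _ => by omega
  rw [add_sub_cancel_right] at h₁ h₂
  rw [show n + 2 = n + 1 + 1 by ring]
  linear_combination h₁ + X ^ (k + 1).toNat * h₂ + hX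

theorem gpz_add_two' {n : ℤ} (hn : 0 ≤ n) (k : ℤ) :
    gpz (n + 2) (k + 1) = gpz (n + 1) (k + 1) + X ^ (n + 1).toNat * gpz n k
      + X ^ (n + 1 - k).toNat * gpz n (k - 1) := by
  have h₁ := gpz_succ' (n := n + 1) (by omega) (k + 1)
  have h₂ := gpz_succ hn k
  have hX : X ^ (n + 1 - k).toNat * X ^ k.toNat * gpz n k = X ^ (n + 1).toNat * gpz n k := by
    rw [← pow_add]; exact X_pow_mul_gpz_congr fun _ _ => by omega
  rw [add_sub_cancel_right, show n + 1 + 1 - (k + 1) = n + 1 - k by ring] at h₁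
  rw [show n + 2 = n + 1 + 1 by ring]
  linear_combination h₁ + X ^ (n + 1 - k).toNat * h₂ + hX

theorem finsum_sub_comp_sub_one {M : Type*} [AddCommGroup M] {f : ℤ → M}
    (hf : f.HasFiniteSupport) : ∑ᶠ l, (f l - f (l - 1)) = 0 := by
  rw [finsum_sub_distrib hf (hf.fun_comp_of_injective (sub_left_injective (b := 1))),
    ← finsum_comp_equiv (Equiv.subRight 1) (f := f)]
  exact sub_self _

theorem neg_one_pow_natAbs_sub_one {R : Type*} [Ring R] (l : ℤ) :
    (-1 : R) ^ (l - 1).natAbs = -(-1) ^ l.natAbs := by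
  rw [← Int.coe_negOnePow, ← Int.coe_negOnePow, Int.negOnePow_sub, Int.negOnePow_one]
  simp

theorem exists_five_mul_sq_sub_eq_two_mul (l : ℤ) : ∃ a : ℕ, 5 * l ^ 2 - l = 2 * a := by
  have heven : Even (5 * l ^ 2 - l) := by
    rw [show 5 * l ^ 2 - l = l * (l - 1) + 2 * (2 * l ^ 2) by ring]
    exact (Int.even_mul_pred_self l).add (even_two_mul _)
  obtain ⟨t, ht⟩ := heven
  have hnonneg : 0 ≤ 5 * l ^ 2 - l := by nlinarith [sq_nonneg l]
  exact ⟨t.toNat, by omega⟩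

noncomputable def schurTerm (n l : ℤ) : ℤ[X] :=
  (-1 : ℤ[X]) ^ l.natAbs * X ^ ((5 * l ^ 2 - l) / 2).toNat * gpz n ((n + 5 * l).fdiv 2)

/-- For `n + 5 * l = 2 * m` this is the leftover `(-1) ^ l * x ^ ((5 * l ^ 2 - l) / 2 + m + 1) *
[n, m + 1]` of `gpz_add_two`; for odd `n + l` the leftover of `gpz_add_two'` is
`-schurCorrection n (l - 1)`. -/
noncomputable def schurCorrection (n l : ℤ) : ℤ[X] :=
  if Even (n + l) then
    (-1 : ℤ[X]) ^ l.natAbs * X ^ ((5 * l ^ 2 + 4 * l + n + 2) / 2).toNat *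
      gpz n ((n + 5 * l) / 2 + 1)
  else 0

theorem schurCorrection_eq_zero {n l : ℤ} (h : Odd (n + l)) : schurCorrection n l = 0 :=
  if_neg (Int.not_even_iff_odd.mpr h)

theorem schurTerm_add_two_of_even {n l : ℤ} (hn : 0 ≤ n) (h : Even (n + l)) :
    schurTerm (n + 2) l
      = schurTerm (n + 1) l + X ^ (n + 1).toNat * schurTerm n l + schurCorrection n l := by
  obtain ⟨m, hm⟩ : ∃ m, n + 5 * l = 2 * m := by obtain ⟨t, ht⟩ := h; exact ⟨t + 2 * l, by omega⟩
  obtain ⟨a, ha⟩ := exists_five_mul_sq_sub_eq_two_mul l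
  have hX : X ^ ((5 * l ^ 2 - l) / 2).toNat * (X ^ (m + 1).toNat * gpz n (m + 1))
      = X ^ ((5 * l ^ 2 + 4 * l + n + 2) / 2).toNat * gpz n (m + 1) := by
    rw [← mul_assoc, ← pow_add]; exact X_pow_mul_gpz_congr fun _ _ => by omega
  simp only [schurTerm, schurCorrection, if_pos h, Int.fdiv_eq_ediv_of_nonneg _ zero_le_two]
  rw [show (n + 2 + 5 * l) / 2 = m + 1 by omega, show (n + 1 + 5 * l) / 2 = m by omega,
    show (n + 5 * l) / 2 = m by omega, gpz_add_two hn]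
  linear_combination (-1 : ℤ[X]) ^ l.natAbs * hX

theorem schurTerm_add_two_of_odd {n l : ℤ} (hn : 0 ≤ n) (h : Odd (n + l)) :
    schurTerm (n + 2) l
      = schurTerm (n + 1) l + X ^ (n + 1).toNat * schurTerm n l - schurCorrection n (l - 1) := by
  obtain ⟨m, hm⟩ : ∃ m, n + 5 * l = 2 * m + 1 := by
    obtain ⟨t, ht⟩ := h; exact ⟨t + 2 * l, by omega⟩
  obtain ⟨a, ha⟩ := exists_five_mul_sq_sub_eq_two_mul l
  have hX : X ^ ((5 * l ^ 2 - l) / 2).toNat * (X ^ (n + 1 - m).toNat * gpz n (m - 1))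
      = X ^ ((5 * l ^ 2 - 6 * l + n + 3) / 2).toNat * gpz n (m - 1) := by
    rw [← mul_assoc, ← pow_add]; exact X_pow_mul_gpz_congr fun _ _ => by omega
  have heven : Even (n + (l - 1)) := by rw [← add_sub_assoc]; exact h.sub_odd odd_one
  simp only [schurTerm, schurCorrection, if_pos heven, Int.fdiv_eq_ediv_of_nonneg _ zero_le_two,
    neg_one_pow_natAbs_sub_one]
  rw [show (n + 2 + 5 * l) / 2 = m + 1 by omega, show (n + 1 + 5 * l) / 2 = m + 1 by omega,
    show (n + 5 * l) / 2 = m by omega, show (n + 5 * (l - 1)) / 2 + 1 = m - 1 by omega,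
    show 5 * (l - 1) ^ 2 + 4 * (l - 1) + n + 2 = 5 * l ^ 2 - 6 * l + n + 3 by ring, gpz_add_two' hn]
  linear_combination (-1 : ℤ[X]) ^ l.natAbs * hX

theorem schurTerm_add_two {n : ℤ} (hn : 0 ≤ n) (l : ℤ) :
    schurTerm (n + 2) l = schurTerm (n + 1) l + X ^ (n + 1).toNat * schurTerm n l
      + (schurCorrection n l - schurCorrection n (l - 1)) := by
  rcases Int.even_or_odd (n + l) with h | h
  · have hodd : Odd (n + (l - 1)) := by rw [← add_sub_assoc]; exact h.sub_odd odd_one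
    rw [schurTerm_add_two_of_even hn h, schurCorrection_eq_zero hodd, sub_zero]
  · rw [schurTerm_add_two_of_odd hn h, schurCorrection_eq_zero h]
    ring

theorem schurTerm_hasFiniteSupport (n : ℤ) : (schurTerm n).HasFiniteSupport := by
  refine (Set.finite_Icc (-n) (n + 1)).subset fun l hl => ?_
  have := nonneg_and_le_of_gpz_ne_zero (right_ne_zero_of_mul hl)
  rw [Int.fdiv_eq_ediv_of_nonneg _ zero_le_two] at this
  exact ⟨by omega, by omega⟩

theorem schurCorrection_hasFiniteSupport (n : ℤ) : (schurCorrection n).HasFiniteSupport := by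
  refine (Set.finite_Icc (-n - 1) (n + 1)).subset fun l hl => ?_
  rcases Int.even_or_odd (n + l) with h | h
  · rw [Function.mem_support, schurCorrection, if_pos h] at hl
    have := nonneg_and_le_of_gpz_ne_zero (right_ne_zero_of_mul hl)
    exact ⟨by omega, by omega⟩
  · exact absurd (schurCorrection_eq_zero h) hl

theorem P_eq_finsum_schurTerm (n : ℤ) : P n = ∑ᶠ l, schurTerm n l := rfl

theorem P_add_two {n : ℤ} (hn : 0 ≤ n) : P (n + 2) = P (n + 1) + X ^ (n + 1).toNat * P n := by
  have hT := schurTerm_hasFiniteSupport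
  have hC := schurCorrection_hasFiniteSupport n
  have hC' : (fun l => schurCorrection n l - schurCorrection n (l - 1)).HasFiniteSupport :=
    hC.sub (hC.fun_comp_of_injective sub_left_injective)
  simp only [P_eq_finsum_schurTerm, schurTerm_add_two hn, mul_finsum]
  rw [finsum_add_distrib (by fun_prop) hC', finsum_sub_comp_sub_one hC, add_zero,
    finsum_add_distrib (hT _) (by fun_prop)]

theorem P_eq_one {n : ℤ} (h₀ : 0 ≤ n) (h₁ : n ≤ 1) : P n = 1 := by
  rw [P_eq_finsum_schurTerm, finsum_eq_single _ 0]
  · simp [schurTerm, Int.fdiv_eq_ediv_of_nonneg, (by omega : n / 2 = 0), gpz_zero_right h₀]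
  · intro l hl
    rw [schurTerm, Int.fdiv_eq_ediv_of_nonneg _ zero_le_two, gpz_eq_zero (by omega), mul_zero]

def kangarooSets (m : ℕ) : Finset (Finset ℕ) :=
  (Ico 1 m).powerset.filter fun S => ∀ i ∈ S, ∀ j ∈ S, i < j → i + 2 ≤ j

noncomputable def kangarooPoly (m : ℕ) : ℤ[X] := ∑ S ∈ kangarooSets m, X ^ S.sum id

theorem mem_kangarooSets {m : ℕ} {S : Finset ℕ} :
    S ∈ kangarooSets m ↔ (∀ i ∈ S, 1 ≤ i ∧ i < m) ∧ ∀ i ∈ S, ∀ j ∈ S, i < j → i + 2 ≤ j := by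
  simp only [kangarooSets, mem_filter, mem_powerset, subset_iff, mem_Ico]

theorem kangarooPoly_eq_one {m : ℕ} (hm : m ≤ 1) : kangarooPoly m = 1 := by
  rw [kangarooPoly, kangarooSets, Ico_eq_empty (by omega), powerset_empty,
    filter_singleton, if_pos (by simp), sum_singleton, sum_empty, pow_zero]

theorem filter_not_mem_kangarooSets (m : ℕ) :
    (kangarooSets (m + 2)).filter (m + 1 ∉ ·) = kangarooSets (m + 1) := by
  ext S
  simp only [mem_filter, mem_kangarooSets]
  constructor
  · rintro ⟨⟨hrange, hgap⟩, hm⟩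
    refine ⟨fun i hi => ?_, hgap⟩
    have := hrange i hi
    have : i ≠ m + 1 := fun h => hm (h ▸ hi)
    omega
  · rintro ⟨hrange, hgap⟩
    exact ⟨⟨fun i hi => by have := hrange i hi; omega, hgap⟩,
      fun hm => by have := hrange _ hm; omega⟩

theorem filter_mem_kangarooSets (m : ℕ) :
    (kangarooSets (m + 2)).filter (m + 1 ∈ ·) = (kangarooSets m).image (insert (m + 1)) := by
  ext S
  simp only [mem_filter, mem_image, mem_kangarooSets]
  constructor
  · rintro ⟨⟨hrange, hgap⟩, hm⟩
    refine ⟨S.erase (m + 1), ⟨fun i hi => ?_, fun i hi j hj =>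
      hgap i (mem_of_mem_erase hi) j (mem_of_mem_erase hj)⟩, insert_erase hm⟩
    obtain ⟨hne, hi⟩ := mem_erase.mp hi
    have := hrange i hi
    have : i ≠ m := fun h => by have := hgap i hi (m + 1) hm (by omega); omega
    omega
  · rintro ⟨T, ⟨hrange, hgap⟩, rfl⟩
    refine ⟨⟨fun i hi => ?_, fun i hi j hj hij => ?_⟩, mem_insert_self _ _⟩
    · rcases mem_insert.mp hi with rfl | hi
      · omega
      · have := hrange i hi; omega
    · rcases mem_insert.mp hi with rfl | hi <;> rcases mem_insert.mp hj with rfl | hj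
      · omega
      · have := hrange j hj; omega
      · have := hrange i hi; omega
      · exact hgap i hi j hj hij

theorem kangarooPoly_add_two (m : ℕ) :
    kangarooPoly (m + 2) = kangarooPoly (m + 1) + X ^ (m + 1) * kangarooPoly m := by
  have hnot : ∀ T ∈ kangarooSets m, m + 1 ∉ T := fun T hT hm => by
    have := (mem_kangarooSets.mp hT).1 _ hm; omega
  rw [kangarooPoly, ← sum_filter_not_add_sum_filter _ (m + 1 ∈ ·),
    filter_not_mem_kangarooSets, filter_mem_kangarooSets, sum_image, kangarooPoly, kangarooPoly,
    mul_sum]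
  · congr 1
    refine sum_congr rfl fun T hT => ?_
    rw [sum_insert (hnot T hT), pow_add, id]
  · intro T hT U hU h
    rw [← erase_insert (hnot T hT), h, erase_insert (hnot U hU)]

theorem coeff_kangarooPoly (m N : ℕ) :
    (kangarooPoly m).coeff N = #{S ∈ kangarooSets m | S.sum id = N} := by
  simp only [kangarooPoly, finsetSum_coeff, coeff_X_pow, sum_boole, eq_comm (a := N)]

theorem P_natCast (m : ℕ) : P m = kangarooPoly m := by
  induction m using Nat.twoStepInduction with
  | zero => exact (P_eq_one le_rfl zero_le_one).trans (kangarooPoly_eq_one zero_le_one).symm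
  | one => exact (P_eq_one zero_le_one le_rfl).trans (kangarooPoly_eq_one le_rfl).symm
  | more m ih₀ ih₁ =>
    have h := P_add_two (Int.natCast_nonneg m)
    push_cast at h ih₁ ⊢
    rw [h, ih₁, ih₀, kangarooPoly_add_two, show ((m : ℤ) + 1).toNat = m + 1 by omega]

/-- The coefficient of `x^N` in `P(n)` counts the partitions of `N` into parts
differing pairwise by at least 2, with largest part at most `n - 1`. -/
theorem gs1_counts_kangaroo_partitions (n : ℤ) (hn : 0 ≤ n) (N : ℕ) :
    (P n).coeff N =
      (Nat.card {S : Finset ℕ // (∀ i ∈ S, 1 ≤ i ∧ (i : ℤ) ≤ n - 1) ∧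
        (∀ i ∈ S, ∀ j ∈ S, i < j → i + 2 ≤ j) ∧ S.sum id = N} : ℤ) := by
  obtain ⟨m, rfl⟩ := Int.eq_ofNat_of_zero_le hn
  rw [P_natCast, coeff_kangarooPoly, ← Nat.card_eq_finsetCard]
  congr 1
  refine Nat.card_congr (Equiv.subtypeEquivRight fun S => ?_)
  simp only [mem_filter, mem_kangarooSets, and_assoc, Int.le_sub_one_iff, Nat.cast_lt]
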